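/- Let v be a non-root node in an STT T on a tree G, with parent p. If the rotation of v with p is not allowed (i.e., performing it would violate the 2-cut property), then |∂(T_v)| = 1 and |∂(T_p)| = 2; in particular, p is not the root of T and the rotation of p with its own parent is allowed. -/

import Mathlib

open SimpleGraph

variable {V : Type*}

/-- Reachability within a vertex set `S`. -/
def reachIn (G : SimpleGraph V) (S : Set V) : V → V → Prop :=
  Relation.ReflTransGen (fun x y => x ∈ S ∧ y ∈ S ∧ G.Adj x y)

/-- The connected component of `v` inside the vertex set `S`. -/
def compIn (G : SimpleGraph V) (S : Set V) (v : V) : Set V :=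
  {u | reachIn G S v u}

/-- `IsSearchTree G par S r`: the parent map `par` describes a search tree with root `r`
on the part of `G` induced by `S`, built recursively: the root `r` is chosen, and each
connected component of `S \ {r}` carries a search tree whose root is a child of `r`. -/
inductive IsSearchTree (G : SimpleGraph V) (par : V → Option V) : Set V → V → Prop where
  | node (S : Set V) (r : V) (ρ : V → V) (hr : r ∈ S)
      (hρ : ∀ v ∈ S, v ≠ r → par (ρ v) = some r)
      (h : ∀ v ∈ S, v ≠ r → IsSearchTree G par (compIn G (S \ {r}) v) (ρ v)) :
      IsSearchTree G par S r

/-- `isAnc par a v`: `a` is an ancestor of `v` (reflexively). -/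
def isAnc (par : V → Option V) (a v : V) : Prop :=
  Relation.ReflTransGen (fun x y => par x = some y) v a

/-- The subtree rooted at `v`: all descendants of `v` (including `v`). -/
def subtree (par : V → Option V) (v : V) : Set V := {u | isAnc par v u}

/-- The outer boundary `∂(T_v)` of the subtree rooted at `v`. -/
def bdry (G : SimpleGraph V) (par : V → Option V) (v : V) : Set V :=
  {x | x ∉ subtree par v ∧ ∃ u ∈ subtree par v, G.Adj x u}

/-- A search tree is 2-cut if every subtree boundary has size at most 2. -/
def TwoCut (G : SimpleGraph V) (par : V → Option V) : Prop :=
  ∀ v, (bdry G par v).ncard ≤ 2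

open Classical in
/-- The STT rotation of `v` with its parent `p`: `p` becomes a child of `v`, `v` takes the
former parent of `p`, and any child `c` of `v` with `p ∈ ∂(T_c)` is reattached to `p`. -/
noncomputable def rotate (G : SimpleGraph V) (par : V → Option V) (v p : V) :
    V → Option V := fun x =>
  if x = v then par p
  else if x = p then some v
  else if par x = some v ∧ p ∈ bdry G par x then some p
  else par x

/-- A splay step at `x`: a single rotation if `x` has no grandparent; a ZIG-ZAG
(two rotations at `x`) if `x` is a separator; a ZIG-ZIG (rotation at the parent,
then at `x`) otherwise. -/
noncomputable def splayStep (G : SimpleGraph V) (par : V → Option V) (x : V) :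
    V → Option V :=
  match par x with
  | none => par
  | some p =>
    match par p with
    | none => rotate G par x p
    | some g =>
      if (bdry G par x).ncard = 2 then
        rotate G (rotate G par x p) x g
      else
        rotate G (rotate G par p g) x p

/-!
A rotation of `v` with its parent `p` changes only two subtrees: `T_v` becomes the old `T_p`,
and `T_p` shrinks to `(T_p \ T_v) ∪ ⋃ T_c`, the union over the children `c` of `v` with
`p ∈ ∂(T_c)`. Every new boundary vertex of `p` is either `v` or was already in `∂(T_p)`, so
the 2-cut property can only fail when `|∂(T_p)| = 2` and `∂(T_v) = {p, g}`. But `g` and `v` cannot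
both end up on the new boundary of `p`: as `G` is a tree, `p` and `g` each have a single
neighbour in `T_v`, so at most one child `c` is reattached, the neighbours of `g` and of `v` in
the new `T_p` both lie in `T_c`, and then `p, v, g ∈ ∂(T_c)`.
So a disallowed rotation has `|∂(T_v)| = 1` and `|∂(T_p)| = 2`; a nonempty boundary gives `p` a
parent `q`, and since `|∂(T_p)| ≠ 1` the rotation of `p` with `q` is allowed.
-/

open Relation

lemma exists_eq_pair_of_ncard_eq_two {α : Type*} {s : Set α} {a : α} (hs : s.ncard = 2)
    (ha : a ∈ s) : ∃ b, b ≠ a ∧ s = {a, b} := by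
  obtain ⟨x, y, hxy, rfl⟩ := Set.ncard_eq_two.mp hs
  rcases ha with rfl | rfl
  · exact ⟨y, hxy.symm, rfl⟩
  · exact ⟨x, hxy, Set.pair_comm _ _⟩

section Ancestors
variable {f : V → Option V} {a b c u v w : V}

lemma isAnc_of_isAnc_of_ne (h : isAnc f a u) (hne : u ≠ a) (hu : f u = some w) :
    isAnc f a w := by
  obtain rfl | ⟨w', hw', h'⟩ := h.cases_head
  · exact absurd rfl hne
  · rwa [Option.some_inj.mp (hu.symm.trans hw')]

lemma mem_subtree_self : v ∈ subtree f v := .refl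

lemma exists_parent_eq_of_mem_subtree (hu : u ∈ subtree f w) (hne : u ≠ w) :
    ∃ c, f c = some w ∧ u ∈ subtree f c := by
  obtain rfl | ⟨c, hc, hcw⟩ := ReflTransGen.cases_tail hu
  · exact absurd rfl hne
  · exact ⟨c, hcw, hc⟩

lemma subtree_subset_of_parent_eq (hc : f c = some v) : subtree f c ⊆ subtree f v :=
  fun _ hu => ReflTransGen.tail hu hc

lemma isAnc_total (hb : isAnc f b a) (hc : isAnc f c a) : isAnc f c b ∨ isAnc f b c :=
  ReflTransGen.total_of_right_unique
    (fun _ _ _ h₁ h₂ => Option.some_inj.mp (h₁.symm.trans h₂)) hb hc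

end Ancestors

section SearchTree
variable {G : SimpleGraph V} {f : V → Option V} {S : Set V} {r v x y : V}

lemma reachIn_symm (h : reachIn G S x y) : reachIn G S y x := by
  induction h with
  | refl => exact .refl
  | tail _ hstep ih => exact .head ⟨hstep.2.1, hstep.1, hstep.2.2.symm⟩ ih

lemma mem_compIn_self : v ∈ compIn G S v := .refl

lemma mem_of_mem_compIn {u : V} (hu : u ∈ compIn G S v) (hv : v ∈ S) : u ∈ S := by
  obtain rfl | ⟨_, _, hstep⟩ := ReflTransGen.cases_tail hu
  exacts [hv, hstep.2.1]

lemma reachIn_compIn (h : reachIn G S v y) : reachIn G (compIn G S v) v y := by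
  induction h with
  | refl => exact .refl
  | tail hvy hstep ih => exact ih.tail ⟨hvy, hvy.tail hstep, hstep.2.2⟩

lemma reachIn_compIn_of_mem (hx : x ∈ compIn G S v) (hy : y ∈ compIn G S v) :
    reachIn G (compIn G S v) x y :=
  (reachIn_symm (reachIn_compIn hx)).trans (reachIn_compIn hy)

lemma reachIn_univ_of_reachable (h : G.Reachable x y) : reachIn G Set.univ x y := by
  obtain ⟨p⟩ := h
  induction p with
  | nil => exact .refl
  | cons hadj _ ih => exact .head ⟨trivial, trivial, hadj⟩ ih

/-- A walk from `v` to `r` inside `S` can only leave the component of `v` in `S \ {r}`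
by stepping onto `r`. -/
lemma exists_adj_compIn_of_reachIn (hv : v ∈ S) (hvr : v ≠ r) (h : reachIn G S v r) :
    ∃ u ∈ compIn G (S \ {r}) v, G.Adj r u := by
  suffices ∀ z, reachIn G S v z →
      z ∈ compIn G (S \ {r}) v ∨ ∃ u ∈ compIn G (S \ {r}) v, G.Adj r u from
    (this r h).resolve_left fun hr => (mem_of_mem_compIn hr ⟨hv, hvr⟩).2 rfl
  intro z hz
  induction hz with
  | refl => exact .inl mem_compIn_self
  | @tail y z _ hyz ih =>
    refine ih.elim (fun hy => ?_) .inr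
    by_cases hzr : z = r
    · exact .inr ⟨y, hy, hzr ▸ hyz.2.2.symm⟩
    · exact .inl (hy.tail ⟨mem_of_mem_compIn hy ⟨hv, hvr⟩, ⟨hyz.2.1, hzr⟩, hyz.2.2⟩)

lemma IsSearchTree.root_mem (hT : IsSearchTree G f S r) : r ∈ S := by
  cases hT with | node _ _ _ hr _ _ => exact hr

lemma IsSearchTree.parent_mem (hT : IsSearchTree G f S r) (hv : v ∈ S) (hvr : v ≠ r) :
    ∃ w, f v = some w ∧ (w = r ∨ w ∈ compIn G (S \ {r}) v) := by
  induction hT generalizing v with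
  | node S r ρ _ hρ hsub IH =>
    by_cases hvρ : v = ρ v
    · exact ⟨r, hvρ ▸ hρ v hv hvr, .inl rfl⟩
    obtain ⟨w, hw, rfl | hwC⟩ := IH v hv hvr mem_compIn_self hvρ
    · exact ⟨_, hw, .inr (hsub v hv hvr).root_mem⟩
    · exact ⟨w, hw, .inr (mem_of_mem_compIn hwC ⟨mem_compIn_self, hvρ⟩).1⟩

/-- The invariants that the recursive definition of a search tree passes from `S` to the
components of `S \ {r}`; together with `IsSearchTree G f S r` they force `S = subtree f r`. -/
structure WellPlaced (G : SimpleGraph V) (f : V → Option V) (S : Set V) (r : V) : Prop where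
  closed : ∀ ⦃w u⦄, f w = some u → u ∈ S → w ∈ S
  parent_not_mem : ∀ ⦃q⦄, f r = some q → q ∉ S
  reach : ∀ ⦃x⦄, x ∈ S → ∀ ⦃y⦄, y ∈ S → reachIn G S x y
  isAnc_of_adj : ∀ ⦃x u⦄, x ∉ S → u ∈ S → G.Adj x u → isAnc f x r
  adj_parent : ∀ ⦃q⦄, f r = some q → ∃ u ∈ S, G.Adj q u

lemma WellPlaced.subtree_subset (hW : WellPlaced G f S r) (hr : r ∈ S) :
    subtree f r ⊆ S := by
  intro u hu
  induction hu using ReflTransGen.head_induction_on with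
  | refl => exact hr
  | head hstep _ ih => exact hW.closed hstep ih

lemma WellPlaced.compIn (hW : WellPlaced G f S r) (hT : IsSearchTree G f S r) (hv : v ∈ S)
    (hvr : v ≠ r) {c : V} (hc : f c = some r) : WellPlaced G f (compIn G (S \ {r}) v) c where
  closed w u hwu hu := by
    have huS := mem_of_mem_compIn hu ⟨hv, hvr⟩
    have hwr : w ≠ r := fun h => hW.parent_not_mem (h ▸ hwu) huS.1
    obtain ⟨z, hz, hzr | hzC⟩ := hT.parent_mem (hW.closed hwu huS.1) hwr
    all_goals obtain rfl : z = u := Option.some_inj.mp (hz.symm.trans hwu)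
    · exact absurd hzr huS.2
    · exact hu.trans (reachIn_symm hzC)
  parent_not_mem q hq hqC := by
    obtain rfl : r = q := Option.some_inj.mp (hc.symm.trans hq)
    exact (mem_of_mem_compIn hqC ⟨hv, hvr⟩).2 rfl
  reach _ hx _ hy := reachIn_compIn_of_mem hx hy
  isAnc_of_adj x u hx hu hxu := by
    have huS := mem_of_mem_compIn hu ⟨hv, hvr⟩
    by_cases hxS : x ∈ S
    · by_cases hxr : x = r
      · exact .single (hxr ▸ hc)
      · exact absurd (hu.tail ⟨huS, ⟨hxS, hxr⟩, hxu.symm⟩) hx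
    · exact .head hc (hW.isAnc_of_adj hxS huS.1 hxu)
  adj_parent q hq := by
    obtain rfl : r = q := Option.some_inj.mp (hc.symm.trans hq)
    exact exists_adj_compIn_of_reachIn hv hvr (hW.reach hv hT.root_mem)

lemma IsSearchTree.subtree_eq_and_wellPlaced (hT : IsSearchTree G f S r)
    (hW : WellPlaced G f S r) :
    subtree f r = S ∧ ∀ v ∈ S, WellPlaced G f (subtree f v) v := by
  induction hT with
  | node S r ρ hr hρ hsub IH =>
    have hC (v) (hv : v ∈ S) (hvr : v ≠ r) := IH v hv hvr
      (hW.compIn (.node S r ρ hr hρ hsub) hv hvr (hρ v hv hvr))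
    have hsubtree : subtree f r = S := by
      refine (hW.subtree_subset hr).antisymm fun u hu => ?_
      by_cases hur : u = r
      · exact hur ▸ .refl
      · have hu' : u ∈ subtree f (ρ u) := (hC u hu hur).1 ▸ mem_compIn_self
        exact ReflTransGen.tail hu' (hρ u hu hur)
    refine ⟨hsubtree, fun v hv => ?_⟩
    by_cases hvr : v = r
    · exact hvr ▸ hsubtree ▸ hW
    · exact (hC v hv hvr).2 v mem_compIn_self

lemma wellPlaced_univ (hroot : f r = none) (hG : G.Connected) :
    WellPlaced G f Set.univ r where
  closed _ _ _ _ := trivial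
  parent_not_mem q hq := by simp [hroot] at hq
  reach x _ y _ := reachIn_univ_of_reachable (hG.preconnected x y)
  isAnc_of_adj _ _ hx := absurd trivial hx
  adj_parent q hq := by simp [hroot] at hq

lemma IsSearchTree.wellPlaced_subtree (hT : IsSearchTree G f Set.univ r) (hroot : f r = none)
    (hG : G.Connected) (v : V) : WellPlaced G f (subtree f v) v :=
  (hT.subtree_eq_and_wellPlaced (wellPlaced_univ hroot hG)).2 v trivial

end SearchTree

section Acyclic
variable {G : SimpleGraph V} {C : Set V} {x u₁ u₂ : V}

lemma exists_walk_of_reachIn {a b : V} (h : reachIn G C a b) (ha : a ∈ C) :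
    ∃ w : G.Walk a b, ∀ z ∈ w.support, z ∈ C := by
  induction h with
  | refl => exact ⟨.nil, by simp [ha]⟩
  | tail _ hstep ih =>
    obtain ⟨w, hw⟩ := ih
    refine ⟨w.concat hstep.2.2, fun z hz => ?_⟩
    rw [SimpleGraph.Walk.support_concat, List.mem_append,
      List.mem_singleton] at hz
    exact hz.elim (hw z) fun h => h ▸ hstep.2.1

lemma SimpleGraph.IsAcyclic.eq_of_adj_of_reachIn (hG : G.IsAcyclic)
    (hC : ∀ ⦃a⦄, a ∈ C → ∀ ⦃b⦄, b ∈ C → reachIn G C a b) (hx : x ∉ C)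
    (h₁ : u₁ ∈ C) (h₂ : u₂ ∈ C) (a₁ : G.Adj x u₁) (a₂ : G.Adj x u₂) : u₁ = u₂ := by
  classical
  obtain ⟨w, hw⟩ := exists_walk_of_reachIn (hC h₁ h₂) h₁
  have hxw : x ∉ w.bypass.support := fun h =>
    hx (hw x (w.support_bypass_subset_support h))
  have hxu₂ : x ∉ (SimpleGraph.Walk.nil : G.Walk u₂ u₂).support := by
    simpa using ne_of_mem_of_not_mem h₂ hx |>.symm
  -- the path from `x` through `u₁` and then inside `C` must be the edge `x u₂`
  have hpath := (hG.subsingleton_path x u₂).elim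
    ⟨.cons a₁ w.bypass, w.bypass_isPath.cons hxw⟩
    ⟨.cons a₂ .nil, SimpleGraph.Walk.IsPath.nil.cons hxu₂⟩
  have hlen := congrArg (fun q : G.Path x u₂ => q.1.length) hpath
  simp only [SimpleGraph.Walk.length_cons, SimpleGraph.Walk.length_nil] at hlen
  exact SimpleGraph.Walk.eq_of_length_eq_zero (p := w.bypass) (by omega)

end Acyclic

section Rotation
variable {G : SimpleGraph V} {f : V → Option V} {a b c c' g p u v x y : V}

lemma bdry_congr {f' : V → Option V} (h : subtree f x = subtree f' y) :
    bdry G f x = bdry G f' y := by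
  simp only [bdry, h]

lemma rotate_apply_self : rotate G f v p v = f p := by simp [rotate]

lemma rotate_apply_parent (h : p ≠ v) : rotate G f v p p = some v := by simp [rotate, h]

lemma rotate_apply_of_reattached (hxv : x ≠ v) (hxp : x ≠ p)
    (hx : f x = some v ∧ p ∈ bdry G f x) : rotate G f v p x = some p := by
  simp [rotate, hxv, hxp, hx]

lemma rotate_apply_of_not_reattached (hxv : x ≠ v) (hxp : x ≠ p)
    (hx : ¬(f x = some v ∧ p ∈ bdry G f x)) : rotate G f v p x = f x := by
  simp only [rotate, if_neg hxv, if_neg hxp, if_neg hx]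

lemma subtree_rotate_self (hvp : f v = some p) (hne : v ≠ p) :
    subtree (rotate G f v p) v = subtree f p := by
  have hp : rotate G f v p p = some v := rotate_apply_parent hne.symm
  ext u
  constructor
  · intro hu
    induction hu using ReflTransGen.head_induction_on with
    | refl => exact .single hvp
    | @head u w huw _ ih =>
      by_cases huv : u = v
      · exact huv ▸ .single hvp
      by_cases hup : u = p
      · exact hup ▸ .refl
      by_cases hx : f u = some v ∧ p ∈ bdry G f u
      · exact .head hx.1 (.single hvp)
      · exact .head ((rotate_apply_of_not_reattached huv hup hx).symm.trans huw) ih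
  · intro hu
    induction hu using ReflTransGen.head_induction_on with
    | refl => exact .single hp
    | @head u w huw _ ih =>
      by_cases huv : u = v
      · exact huv ▸ .refl
      by_cases hup : u = p
      · rw [hup]; exact .single hp
      by_cases hx : f u = some v ∧ p ∈ bdry G f u
      · exact .head (rotate_apply_of_reattached huv hup hx) (.single hp)
      · exact .head ((rotate_apply_of_not_reattached huv hup hx).trans huw) ih

lemma subtree_rotate_of_ne (hvp : f v = some p) (hne : v ≠ p) (hxv : x ≠ v) (hxp : x ≠ p) :
    subtree (rotate G f v p) x = subtree f x := by
  have hp : rotate G f v p p = some v := rotate_apply_parent hne.symm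
  ext u
  constructor
  · intro hu
    induction hu using ReflTransGen.head_induction_on with
    | refl => exact .refl
    | @head u w huw _ ih =>
      by_cases huv : u = v
      · rw [huv, rotate_apply_self] at huw
        rw [huv]
        exact .head hvp (.head huw ih)
      by_cases hup : u = p
      · rw [hup, hp, Option.some_inj] at huw
        rw [hup]
        exact isAnc_of_isAnc_of_ne (huw ▸ ih) (Ne.symm hxv) hvp
      by_cases hx : f u = some v ∧ p ∈ bdry G f u
      · rw [rotate_apply_of_reattached huv hup hx, Option.some_inj] at huw
        exact .head hx.1 (.head hvp (huw ▸ ih))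
      · exact .head ((rotate_apply_of_not_reattached huv hup hx).symm.trans huw) ih
  · intro hu
    induction hu using ReflTransGen.head_induction_on with
    | refl => exact .refl
    | @head u w huw _ ih =>
      by_cases huv : u = v
      · rw [huv, hvp, Option.some_inj] at huw
        rw [huv]
        exact isAnc_of_isAnc_of_ne (huw ▸ ih) (Ne.symm hxp) hp
      by_cases hup : u = p
      · rw [hup] at huw ⊢
        exact .head hp (.head (rotate_apply_self.trans huw) ih)
      by_cases hx : f u = some v ∧ p ∈ bdry G f u
      · rw [hx.1, Option.some_inj] at huw
        exact .head (rotate_apply_of_reattached huv hup hx) (.head hp (huw ▸ ih))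
      · exact .head ((rotate_apply_of_not_reattached huv hup hx).trans huw) ih

lemma mem_subtree_rotate_parent_of_not_mem (hu : u ∈ subtree f p)
    (huv : u ∉ subtree f v) : u ∈ subtree (rotate G f v p) p := by
  induction hu using ReflTransGen.head_induction_on with
  | refl => exact .refl
  | @head u w huw hwp ih =>
    by_cases hup : u = p
    · rw [hup]; exact .refl
    have hu : ¬(f u = some v ∧ p ∈ bdry G f u) := fun h => huv (.single h.1)
    have huv' : u ≠ v := fun h => huv (h ▸ mem_subtree_self)
    have hwv : w ∉ subtree f v := fun h => huv (.head huw h)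
    exact .head ((rotate_apply_of_not_reattached huv' hup hu).trans huw) (ih hwv)

lemma isAnc_antisymm_of_wellPlaced (hW : ∀ v, WellPlaced G f (subtree f v) v)
    (hab : isAnc f a b) (hba : isAnc f b a) : a = b := by
  by_contra hne
  obtain rfl | ⟨w, hbw, hwa⟩ := ReflTransGen.cases_head hab
  · exact hne rfl
  · exact (hW b).parent_not_mem hbw (hwa.trans hba)

lemma ne_of_parent_eq (hW : ∀ v, WellPlaced G f (subtree f v) v) (h : f a = some b) : a ≠ b :=
  fun hab => (hW a).parent_not_mem h (hab ▸ mem_subtree_self)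

lemma eq_of_isAnc_of_parent_eq (hW : ∀ v, WellPlaced G f (subtree f v) v)
    (hc : f c = some v) (hc' : f c' = some v) (h : isAnc f c' c) : c = c' := by
  obtain rfl | ⟨w, hcw, hwc'⟩ := ReflTransGen.cases_head h
  · rfl
  · rw [hc, Option.some_inj] at hcw
    exact absurd (hcw ▸ hwc') ((hW c').parent_not_mem hc')

lemma eq_of_mem_subtree_of_parent_eq (hW : ∀ v, WellPlaced G f (subtree f v) v)
    (hc : f c = some v) (hc' : f c' = some v) (hu : u ∈ subtree f c) (hu' : u ∈ subtree f c') :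
    c = c' :=
  (isAnc_total hu hu').elim (eq_of_isAnc_of_parent_eq hW hc hc')
    fun h => (eq_of_isAnc_of_parent_eq hW hc' hc h).symm

lemma WellPlaced.exists_parent_of_mem_bdry (hW : WellPlaced G f (subtree f v) v)
    (hx : x ∈ bdry G f v) : ∃ q, f v = some q := by
  obtain ⟨hxv, u, hu, hxu⟩ := hx
  obtain rfl | ⟨q, hq, -⟩ := ReflTransGen.cases_head (hW.isAnc_of_adj hxv hu hxu)
  · exact absurd mem_subtree_self hxv
  · exact ⟨q, hq⟩

lemma mem_bdry_parent_of_mem_bdry (hW : ∀ v, WellPlaced G f (subtree f v) v)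
    (hvp : f v = some p) (hg : g ∈ bdry G f v) (hgp : g ≠ p) : g ∈ bdry G f p := by
  obtain ⟨hgv, u, hu, hgu⟩ := hg
  have hpg : isAnc f g p := isAnc_of_isAnc_of_ne ((hW v).isAnc_of_adj hgv hu hgu)
    (ne_of_mem_of_not_mem mem_subtree_self hgv) hvp
  exact ⟨fun h => hgp (isAnc_antisymm_of_wellPlaced hW hpg h), u,
    subtree_subset_of_parent_eq hvp hu, hgu⟩

lemma mem_subtree_rotate_parent_of_reattached (hW : ∀ v, WellPlaced G f (subtree f v) v)
    (hvp : f v = some p) (hc : f c = some v ∧ p ∈ bdry G f c) (hu : u ∈ subtree f c) :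
    u ∈ subtree (rotate G f v p) p := by
  have hvc : v ∉ subtree f c := (hW c).parent_not_mem hc.1
  have hpc : p ∉ subtree f c := fun h =>
    (hW v).parent_not_mem hvp (subtree_subset_of_parent_eq hc.1 h)
  induction hu using ReflTransGen.head_induction_on with
  | refl =>
    exact .single (rotate_apply_of_reattached (ne_of_mem_of_not_mem mem_subtree_self hvc)
      (ne_of_mem_of_not_mem mem_subtree_self hpc) hc)
  | @head u w huw hwc ih =>
    have huc : u ∈ subtree f c := .head huw hwc
    have hu : ¬(f u = some v ∧ p ∈ bdry G f u) := fun h =>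
      hvc (Option.some_inj.mp (huw.symm.trans h.1) ▸ hwc)
    exact .head ((rotate_apply_of_not_reattached (ne_of_mem_of_not_mem huc hvc)
      (ne_of_mem_of_not_mem huc hpc) hu).trans huw) ih

lemma mem_subtree_rotate_parent (hW : ∀ v, WellPlaced G f (subtree f v) v)
    (hvp : f v = some p) :
    u ∈ subtree (rotate G f v p) p ↔ (u ∈ subtree f p ∧ u ∉ subtree f v) ∨
      ∃ c, (f c = some v ∧ p ∈ bdry G f c) ∧ u ∈ subtree f c := by
  have hpv : p ∉ subtree f v := (hW v).parent_not_mem hvp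
  refine ⟨fun hu => ?_, ?_⟩
  swap
  · rintro (⟨hup, huv⟩ | ⟨c, hc, huc⟩)
    exacts [mem_subtree_rotate_parent_of_not_mem hup huv,
      mem_subtree_rotate_parent_of_reattached hW hvp hc huc]
  induction hu using ReflTransGen.head_induction_on with
  | refl => exact .inl ⟨mem_subtree_self, hpv⟩
  | @head u w huw _ ih =>
    by_cases hup : u = p
    · rw [hup]; exact .inl ⟨mem_subtree_self, hpv⟩
    by_cases huv : u = v
    · rw [huv, rotate_apply_self] at huw
      exfalso
      rcases ih with ⟨hwp, -⟩ | ⟨c, hc, hwc⟩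
      · exact (hW p).parent_not_mem huw hwp
      · exact hpv (.head huw (subtree_subset_of_parent_eq hc.1 hwc))
    by_cases hx : f u = some v ∧ p ∈ bdry G f u
    · exact .inr ⟨u, hx, mem_subtree_self⟩
    rw [rotate_apply_of_not_reattached huv hup hx] at huw
    rcases ih with ⟨hwp, hwv⟩ | ⟨c, hc, hwc⟩
    · exact .inl ⟨.head huw hwp, fun huv' => hwv (isAnc_of_isAnc_of_ne huv' huv huw)⟩
    · exact .inr ⟨c, hc, .head huw hwc⟩

lemma subtree_rotate_parent_subset (hW : ∀ v, WellPlaced G f (subtree f v) v)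
    (hvp : f v = some p) : subtree (rotate G f v p) p ⊆ subtree f p := fun u hu => by
  rcases (mem_subtree_rotate_parent hW hvp).mp hu with ⟨hup, -⟩ | ⟨c, hc, huc⟩
  exacts [hup, subtree_subset_of_parent_eq hvp (subtree_subset_of_parent_eq hc.1 huc)]

lemma bdry_rotate_parent_subset (hW : ∀ v, WellPlaced G f (subtree f v) v)
    (hvp : f v = some p) : bdry G (rotate G f v p) p ⊆ bdry G f p ∪ {v} := by
  have hT' := fun {u} => mem_subtree_rotate_parent (G := G) (u := u) hW hvp
  rintro x ⟨hx', u, hu', hxu⟩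
  by_cases hxv : x = v
  · exact .inr hxv
  refine .inl ⟨fun hxp => ?_, u, subtree_rotate_parent_subset hW hvp hu', hxu⟩
  have hxTv : x ∈ subtree f v := by_contra fun h => hx' (hT'.mpr (.inl ⟨hxp, h⟩))
  obtain ⟨c, hcv, hxc⟩ := exists_parent_eq_of_mem_subtree hxTv hxv
  have hpc : p ∉ bdry G f c := fun h => hx' (hT'.mpr (.inr ⟨c, ⟨hcv, h⟩, hxc⟩))
  have huc : u ∉ subtree f c := fun huc => by
    rcases hT'.mp hu' with ⟨-, huv⟩ | ⟨c', hc', huc'⟩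
    · exact huv (subtree_subset_of_parent_eq hcv huc)
    · exact hpc (eq_of_mem_subtree_of_parent_eq hW hc'.1 hcv huc' huc ▸ hc'.2)
  have huv : u ≠ v := by
    rintro rfl
    rcases hT'.mp hu' with ⟨-, h⟩ | ⟨c', hc', h⟩
    exacts [h mem_subtree_self, (hW c').parent_not_mem hc'.1 h]
  -- `u` is a proper ancestor of `c` other than `v` lying in `T_p`, hence `u = p`
  have hcu : isAnc f u c := (hW c).isAnc_of_adj huc hxc hxu.symm
  have hvu : isAnc f u v :=
    isAnc_of_isAnc_of_ne hcu (ne_of_mem_of_not_mem mem_subtree_self huc) hcv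
  have hup : u = p := isAnc_antisymm_of_wellPlaced hW (isAnc_of_isAnc_of_ne hvu huv.symm hvp)
    (subtree_rotate_parent_subset hW hvp hu')
  subst hup
  exact hpc ⟨huc, x, hxc, hxu.symm⟩

lemma mem_bdry_of_mem_bdry_rotate_parent (hG : G.IsAcyclic)
    (hW : ∀ v, WellPlaced G f (subtree f v) v) (hvp : f v = some p)
    (hg : bdry G f v = {p, g}) (hgp : g ∉ subtree f p) (hc : f c = some v ∧ p ∈ bdry G f c)
    (hv : v ∈ bdry G (rotate G f v p) p) : v ∈ bdry G f c := by
  obtain ⟨-, y, hy', hvy⟩ := hv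
  obtain ⟨-, z, hzc, hpz⟩ := hc.2
  have hpv : p ∉ subtree f v := (hW v).parent_not_mem hvp
  have hzv : z ∈ subtree f v := subtree_subset_of_parent_eq hc.1 hzc
  refine ⟨(hW c).parent_not_mem hc.1, y, ?_, hvy⟩
  rcases (mem_subtree_rotate_parent hW hvp).mp hy' with ⟨hyp, hyv⟩ | ⟨c', hc', hyc'⟩
  · have hy : y ∈ bdry G f v := ⟨hyv, v, mem_subtree_self, hvy.symm⟩
    rw [hg] at hy
    obtain rfl | rfl := hy
    · -- `p` has a single neighbour in `T_v`
      have hvz : v = z := hG.eq_of_adj_of_reachIn (hW v).reach hpv mem_subtree_self hzv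
        hvy.symm hpz
      exact absurd (hvz ▸ hzc) ((hW c).parent_not_mem hc.1)
    · exact absurd hyp hgp
  · obtain ⟨-, z', hz'c', hpz'⟩ := hc'.2
    have hzz' : z = z' := hG.eq_of_adj_of_reachIn (hW v).reach hpv hzv
      (subtree_subset_of_parent_eq hc'.1 hz'c') hpz hpz'
    rwa [eq_of_mem_subtree_of_parent_eq hW hc.1 hc'.1 hzc (hzz' ▸ hz'c')]

lemma not_mem_bdry_rotate_parent [Finite V] (hG : G.IsAcyclic)
    (hW : ∀ v, WellPlaced G f (subtree f v) v) (h2 : TwoCut G f) (hvp : f v = some p)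
    (hgp : g ≠ p) (hg : bdry G f v = {p, g}) :
    g ∉ bdry G (rotate G f v p) p ∨ v ∉ bdry G (rotate G f v p) p := by
  have hgv : g ∈ bdry G f v := by rw [hg]; exact .inr rfl
  have hgTp : g ∉ subtree f p := (mem_bdry_parent_of_mem_bdry hW hvp hgv hgp).1
  rw [← not_and_or]
  rintro ⟨⟨-, u, hu', hgu⟩, hv'⟩
  obtain ⟨-, u', hu'v, hgu'⟩ := hgv
  have huv : u ∈ subtree f v :=
    hG.eq_of_adj_of_reachIn (hW p).reach hgTp (subtree_rotate_parent_subset hW hvp hu')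
      (subtree_subset_of_parent_eq hvp hu'v) hgu hgu' ▸ hu'v
  obtain ⟨c, hc, huc⟩ := ((mem_subtree_rotate_parent hW hvp).mp hu').resolve_left
    fun h => h.2 huv
  have hvc := mem_bdry_of_mem_bdry_rotate_parent hG hW hvp hg hgTp hc hv'
  have hgc : g ∈ bdry G f c := ⟨fun h => hgTp (subtree_subset_of_parent_eq hvp
    (subtree_subset_of_parent_eq hc.1 h)), u, huc, hgu⟩
  have hvg : v ≠ g := ne_of_mem_of_not_mem (subtree_subset_of_parent_eq hvp mem_subtree_self) hgTp
  exact ((Set.two_lt_ncard_iff (Set.toFinite _)).mpr ⟨p, v, g, hc.2, hvc, hgc,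
    (ne_of_parent_eq hW hvp).symm, hgp.symm, hvg⟩).not_ge (h2 c)

lemma ncard_bdry_rotate_parent_le [Finite V] (hG : G.IsAcyclic)
    (hW : ∀ v, WellPlaced G f (subtree f v) v) (h2 : TwoCut G f) (hvp : f v = some p)
    (hcond : ¬((bdry G f v).ncard = 1 ∧ (bdry G f p).ncard = 2)) :
    (bdry G (rotate G f v p) p).ncard ≤ 2 := by
  have hsub := bdry_rotate_parent_subset hW hvp
  have hle : (bdry G f p ∪ {v}).ncard ≤ (bdry G f p).ncard + 1 :=
    (Set.ncard_union_le _ _).trans_eq (by rw [Set.ncard_singleton])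
  rcases (h2 p).lt_or_eq with hp | hp
  · exact (Set.ncard_le_ncard hsub).trans (by omega)
  have hpv : p ∈ bdry G f v := ⟨(hW v).parent_not_mem hvp, (hW v).adj_parent hvp⟩
  have hv2 : (bdry G f v).ncard = 2 := by
    have := (Set.ncard_pos (Set.toFinite _)).mpr ⟨p, hpv⟩
    have := h2 v
    omega
  obtain ⟨g, hgp, hg⟩ := exists_eq_pair_of_ncard_eq_two hv2 hpv
  obtain ⟨w, hw, hw'⟩ : ∃ w ∈ bdry G f p ∪ {v}, w ∉ bdry G (rotate G f v p) p := by
    rcases not_mem_bdry_rotate_parent hG hW h2 hvp hgp hg with h | h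
    · refine ⟨g, .inl (mem_bdry_parent_of_mem_bdry hW hvp ?_ hgp), h⟩
      rw [hg]; exact .inr rfl
    · exact ⟨v, .inr rfl, h⟩
  calc (bdry G (rotate G f v p) p).ncard
      ≤ ((bdry G f p ∪ {v}) \ {w}).ncard :=
        Set.ncard_le_ncard fun x hx => ⟨hsub hx, fun h => hw' (h ▸ hx)⟩
    _ = (bdry G f p ∪ {v}).ncard - 1 := Set.ncard_sdiff_singleton_of_mem hw
    _ ≤ 2 := by omega

theorem twoCut_rotate [Finite V] (hG : G.IsAcyclic) (hW : ∀ v, WellPlaced G f (subtree f v) v)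
    (h2 : TwoCut G f) (hvp : f v = some p)
    (hcond : ¬((bdry G f v).ncard = 1 ∧ (bdry G f p).ncard = 2)) :
    TwoCut G (rotate G f v p) := by
  have hne : v ≠ p := ne_of_parent_eq hW hvp
  intro x
  by_cases hxv : x = v
  · rw [hxv, bdry_congr (subtree_rotate_self hvp hne)]
    exact h2 p
  by_cases hxp : x = p
  · rw [hxp]
    exact ncard_bdry_rotate_parent_le hG hW h2 hvp hcond
  · rw [bdry_congr (subtree_rotate_of_ne hvp hne hxv hxp)]
    exact h2 x

end Rotation

/-- If the rotation of `v` with its parent `p` would violate the 2-cut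
property, then `|∂(T_v)| = 1` and `|∂(T_p)| = 2`; in particular `p` is not the root,
and rotating `p` with its own parent preserves the 2-cut property. -/
theorem parent_rotation_allowed_of_rotation_disallowed [Fintype V] (G : SimpleGraph V)
    (hG : G.IsTree) (par : V → Option V) (r : V) (hroot : par r = none)
    (hT : IsSearchTree G par Set.univ r) (h2 : TwoCut G par)
    (v p : V) (hvp : par v = some p)
    (hbad : ¬ TwoCut G (rotate G par v p)) :
    (bdry G par v).ncard = 1 ∧ (bdry G par p).ncard = 2 ∧ p ≠ r ∧
      ∃ q, par p = some q ∧ TwoCut G (rotate G par p q) := by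
  have hW := hT.wellPlaced_subtree hroot hG.connected
  obtain ⟨hv1, hp2⟩ : (bdry G par v).ncard = 1 ∧ (bdry G par p).ncard = 2 := by
    by_contra hcond
    exact hbad (twoCut_rotate hG.isAcyclic hW h2 hvp hcond)
  obtain ⟨x, hx⟩ := Set.nonempty_of_ncard_ne_zero (s := bdry G par p) (by omega)
  obtain ⟨q, hq⟩ := (hW p).exists_parent_of_mem_bdry hx
  refine ⟨hv1, hp2, fun hpr => by simp [hpr, hroot] at hq, q, hq, ?_⟩
  exact twoCut_rotate hG.isAcyclic hW h2 hq (by omega)
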